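/- For β > 0 and x, y ∈ ℝ^d, the double integral ∫_{ℝ^d}∫_{ℝ^d} exp(-β‖x-z₁‖²)·exp(-β‖z₁-z₂‖²)·exp(-β‖z₂-y‖²)·exp(-β‖x-z₂‖²)·exp(-β‖z₁-y‖²) dz₁ dz₂ equals (π²/(8β²))^{d/2} exp(-β‖x-y‖²). -/

import Mathlib

/-!
Completing the square around the midpoint `m` of `x` and `y`, the four factors that link `z₁, z₂`
to `x, y` combine into `exp (-β‖x - y‖²) · exp (-2β‖z₁ - m‖²) · exp (-2β‖z₂ - m‖²)`. What remains
is a closed Gaussian chain `m – z₁ – z₂ – m` with weights `a, b, c = 2β, β, 2β`; integrating out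
`z₂` and then `z₁` gives `(π² / (ab + bc + ca))^{d/2}`, and `ab + bc + ca = 8β²`.
-/

open MeasureTheory Real

section Gaussian

variable {E : Type*} [NormedAddCommGroup E] [InnerProductSpace ℝ E]

theorem mul_norm_sub_sq_add_mul_norm_sub_sq {a b : ℝ} (hab : a + b ≠ 0) (x y z : E) :
    a * ‖x - z‖ ^ 2 + b * ‖z - y‖ ^ 2 =
      (a + b) * ‖z - (a + b)⁻¹ • (a • x + b • y)‖ ^ 2 + a * b / (a + b) * ‖x - y‖ ^ 2 := by
  simp only [norm_sub_sq_real, norm_add_sq_real, norm_smul, inner_smul_left, inner_smul_right,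
    inner_add_right, RCLike.conj_to_real, Real.norm_eq_abs, mul_pow, sq_abs]
  rw [real_inner_comm x z]
  field_simp
  ring

theorem norm_sub_sq_add_norm_sub_sq_eq_midpoint (x y z : E) :
    ‖x - z‖ ^ 2 + ‖z - y‖ ^ 2 = 2 * ‖z - midpoint ℝ x y‖ ^ 2 + ‖x - y‖ ^ 2 / 2 := by
  have h := mul_norm_sub_sq_add_mul_norm_sub_sq (a := 1) (b := 1) (by norm_num) x y z
  rw [midpoint_eq_smul_add]
  norm_num at h ⊢
  linarith

variable [FiniteDimensional ℝ E] [MeasurableSpace E] [BorelSpace E]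

theorem integral_exp_neg_mul_norm_sub_sq {b : ℝ} (hb : 0 < b) (c : E) :
    ∫ z, exp (-b * ‖z - c‖ ^ 2) = (π / b) ^ (Module.finrank ℝ E / 2 : ℝ) := by
  rw [integral_sub_right_eq_self (fun z ↦ exp (-b * ‖z‖ ^ 2)) c,
    GaussianFourier.integral_rexp_neg_mul_sq_norm hb]

theorem integrable_exp_neg_mul_norm_sub_sq {b : ℝ} (hb : 0 < b) (c : E) :
    Integrable fun z ↦ exp (-b * ‖z - c‖ ^ 2) :=
  .of_integral_ne_zero (by rw [integral_exp_neg_mul_norm_sub_sq hb]; positivity)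

theorem integral_gaussian_convolution {a b : ℝ} (ha : 0 < a) (hb : 0 < b) (x y : E) :
    ∫ z, exp (-a * ‖x - z‖ ^ 2) * exp (-b * ‖z - y‖ ^ 2) =
      (π / (a + b)) ^ (Module.finrank ℝ E / 2 : ℝ) * exp (-(a * b / (a + b)) * ‖x - y‖ ^ 2) := by
  have hab : 0 < a + b := by positivity
  have hsplit (z : E) : exp (-a * ‖x - z‖ ^ 2) * exp (-b * ‖z - y‖ ^ 2) =
      exp (-(a + b) * ‖z - (a + b)⁻¹ • (a • x + b • y)‖ ^ 2) *
        exp (-(a * b / (a + b)) * ‖x - y‖ ^ 2) := by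
    rw [← exp_add, ← exp_add]
    congr 1
    linear_combination -mul_norm_sub_sq_add_mul_norm_sub_sq hab.ne' x y z
  simp_rw [hsplit]
  rw [integral_mul_const, integral_exp_neg_mul_norm_sub_sq hab]

theorem integral_prod_gaussian_chain {a b c : ℝ} (ha : 0 < a) (hb : 0 < b)
    (hc : 0 < c) (m : E) :
    ∫ p : E × E, exp (-a * ‖p.1 - m‖ ^ 2) * exp (-b * ‖p.1 - p.2‖ ^ 2) * exp (-c * ‖p.2 - m‖ ^ 2) =
      (π ^ 2 / (a * b + b * c + c * a)) ^ (Module.finrank ℝ E / 2 : ℝ) := by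
  have hint : Integrable (fun p : E × E ↦
      exp (-a * ‖p.1 - m‖ ^ 2) * exp (-b * ‖p.1 - p.2‖ ^ 2) * exp (-c * ‖p.2 - m‖ ^ 2))
      (volume.prod volume) := by
    have hprod := (integrable_exp_neg_mul_norm_sub_sq ha m).mul_prod
      (integrable_exp_neg_mul_norm_sub_sq hc m)
    have hbound (p : E × E) : ‖exp (-b * ‖p.1 - p.2‖ ^ 2)‖ ≤ 1 := by
      rw [norm_of_nonneg (exp_pos _).le, exp_le_one_iff]
      nlinarith [sq_nonneg ‖p.1 - p.2‖]
    refine (hprod.bdd_mul (by fun_prop) (ae_of_all _ hbound)).congr (ae_of_all _ fun p ↦ ?_)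
    ring
  have hinner (z : E) : ∫ w, exp (-a * ‖z - m‖ ^ 2) * exp (-b * ‖z - w‖ ^ 2) *
      exp (-c * ‖w - m‖ ^ 2) = (π / (b + c)) ^ (Module.finrank ℝ E / 2 : ℝ) *
        exp (-(a + b * c / (b + c)) * ‖z - m‖ ^ 2) := by
    simp_rw [mul_assoc, integral_const_mul, integral_gaussian_convolution hb hc]
    rw [mul_left_comm, ← exp_add]
    ring_nf
  rw [Measure.volume_eq_prod, integral_prod _ hint]
  simp_rw [hinner]
  rw [integral_const_mul, integral_exp_neg_mul_norm_sub_sq (by positivity),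
    ← mul_rpow (by positivity) (by positivity)]
  congr 1
  field_simp
  ring

end Gaussian

/-- The crossing term in the variance of the `3`-hop count (proof of Corollary 5.3):
`∫∫ H_β(x,z₁)H_β(z₁,z₂)H_β(z₂,y)H_β(x,z₂)H_β(z₁,y) dz₁dz₂ = (π²/(8β²))^{d/2} e^{-β‖x-y‖²}`. -/
theorem hop3_crossing_integral (d : ℕ) (β : ℝ) (hβ : 0 < β)
    (x y : EuclideanSpace ℝ (Fin d)) :
    ∫ z : EuclideanSpace ℝ (Fin d) × EuclideanSpace ℝ (Fin d),
        Real.exp (-β * ‖x - z.1‖ ^ 2) * Real.exp (-β * ‖z.1 - z.2‖ ^ 2) *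
          Real.exp (-β * ‖z.2 - y‖ ^ 2) * Real.exp (-β * ‖x - z.2‖ ^ 2) *
          Real.exp (-β * ‖z.1 - y‖ ^ 2) =
      (Real.pi ^ 2 / (8 * β ^ 2)) ^ ((d : ℝ) / 2) * Real.exp (-β * ‖x - y‖ ^ 2) := by
  set m := midpoint ℝ x y
  have hsquare (z₁ z₂ : EuclideanSpace ℝ (Fin d)) :
      exp (-β * ‖x - z₁‖ ^ 2) * exp (-β * ‖z₁ - z₂‖ ^ 2) * exp (-β * ‖z₂ - y‖ ^ 2) *
        exp (-β * ‖x - z₂‖ ^ 2) * exp (-β * ‖z₁ - y‖ ^ 2) =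
      exp (-β * ‖x - y‖ ^ 2) * (exp (-(2 * β) * ‖z₁ - m‖ ^ 2) * exp (-β * ‖z₁ - z₂‖ ^ 2) *
        exp (-(2 * β) * ‖z₂ - m‖ ^ 2)) := by
    simp only [← exp_add]
    congr 1
    linear_combination (-β) * norm_sub_sq_add_norm_sub_sq_eq_midpoint x y z₁ +
      (-β) * norm_sub_sq_add_norm_sub_sq_eq_midpoint x y z₂
  simp_rw [hsquare]
  rw [integral_const_mul, integral_prod_gaussian_chain (by positivity) hβ (by positivity),
    finrank_euclideanSpace_fin, mul_comm]
  congr 3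
  ring
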